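/- For λ ∈ (0,1), there does not exist a nontrivial real function u ∈ C²[0,1] satisfying u'' + (2/ρ - 2λρ/(1-ρ²))u' - (2cos(2f₀)/(ρ²(1-ρ²)) + λ(1+λ)/(1-ρ²))u = 0 on (0,1), where f₀(ρ) = 2·arctan(ρ). -/

import Mathlib

noncomputable def f₀ : ℝ → ℝ := fun ρ => 2 * Real.arctan ρ

/-!
The function `g(ρ) = ρ f₀'(ρ) = 2ρ/(1+ρ²)` solves the equation for `λ = 1`. Hence the weighted
Wronskian `s = ρ² (1-ρ²)^λ (g u' - g' u)` satisfies `s' = -k u` with `k > 0` on `(0,1)` when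
`λ < 1`. The function `D = -ρ³ (1-ρ²)^λ g u - A s`, with a rational coefficient `A` chosen to
cancel the `u`-terms, satisfies `D' = -(ρ + A') s` with `ρ + A' < 0`, and `D` vanishes at
`ρ = 0` and, since `λ > 0`, at `ρ = 1`. At a zero of `s`, `D` and `s'` both have the sign of `-u`.
So on a maximal interval where `s > 0`, `D` is strictly increasing, yet `D ≥ 0` at its left end
and `D ≤ 0` at its right end. Applied to `±u` this forces `s ≡ 0`, hence `u ≡ 0`.
-/

open Real Set Filter Topology

theorem exists_first_zero_right {s : ℝ → ℝ} {x₀ b : ℝ} (hb : x₀ < b)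
    (hs : ContinuousOn s (Ico x₀ b)) (hx₀ : 0 < s x₀) :
    ∃ c ∈ Ioc x₀ b, (∀ x ∈ Ico x₀ c, 0 < s x) ∧ (c < b → s c = 0) := by
  by_cases h : ∃ y ∈ Ico x₀ b, s y ≤ 0
  swap
  · push Not at h
    exact ⟨b, ⟨hb, le_rfl⟩, h, fun hbb => absurd hbb (lt_irrefl b)⟩
  obtain ⟨y, hy, hsy⟩ := h
  have hsub : Icc x₀ y ⊆ Ico x₀ b := Icc_subset_Ico_right hy.2
  set K := Icc x₀ y ∩ s ⁻¹' Iic 0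
  have hK : IsCompact K := isCompact_Icc.of_isClosed_subset
    ((hs.mono hsub).preimage_isClosed_of_isClosed isClosed_Icc isClosed_Iic) inter_subset_left
  obtain ⟨c, ⟨⟨hc₀, hcy⟩, hsc⟩, hcmin⟩ := hK.exists_isLeast ⟨y, ⟨hy.1, le_rfl⟩, hsy⟩
  have hpos : ∀ x ∈ Ico x₀ c, 0 < s x := fun x hx => by
    by_contra! hsx
    exact hx.2.not_ge (hcmin ⟨⟨hx.1, hx.2.le.trans hcy⟩, hsx⟩)
  have hx₀c : x₀ < c := hc₀.lt_of_ne (by rintro rfl; exact hsc.not_gt hx₀)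
  refine ⟨c, ⟨hx₀c, hcy.trans hy.2.le⟩, hpos, fun _ => le_antisymm hsc ?_⟩
  have hcont : ContinuousWithinAt s (Ico x₀ c) c :=
    (hs.mono (Icc_subset_Ico_right (hcy.trans_lt hy.2)) c ⟨hc₀, le_rfl⟩).mono Ico_subset_Icc_self
  exact continuousWithinAt_const.closure_le (by rw [closure_Ico hx₀c.ne]; exact ⟨hc₀, le_rfl⟩)
    hcont (fun x hx => (hpos x hx).le)

theorem exists_first_zero_left {s : ℝ → ℝ} {a x₀ : ℝ} (ha : a < x₀)
    (hs : ContinuousOn s (Ioc a x₀)) (hx₀ : 0 < s x₀) :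
    ∃ c ∈ Ico a x₀, (∀ x ∈ Ioc c x₀, 0 < s x) ∧ (a < c → s c = 0) := by
  have hs' : ContinuousOn (fun x => s (-x)) (Ico (-x₀) (-a)) :=
    hs.comp continuousOn_neg fun x hx => ⟨lt_neg.1 hx.2, neg_le.1 hx.1⟩
  obtain ⟨c, hc, hpos, hzero⟩ :=
    exists_first_zero_right (neg_lt_neg ha) hs' (by rwa [neg_neg])
  refine ⟨-c, ⟨le_neg.1 hc.2, neg_lt.1 hc.1⟩, fun x hx => ?_, fun hac => hzero (lt_neg.1 hac)⟩
  simpa using hpos (-x) ⟨neg_le_neg hx.2, neg_lt.1 hx.1⟩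

theorem HasDerivAt.nonpos_of_pos_left {f : ℝ → ℝ} {f' a c : ℝ} (hf : HasDerivAt f f' c)
    (hac : a < c) (hc : f c = 0) (hpos : ∀ x ∈ Ioo a c, 0 < f x) : f' ≤ 0 := by
  refine le_of_tendsto (hasDerivAt_iff_tendsto_slope_left_right.1 hf).1 ?_
  filter_upwards [Ioo_mem_nhdsLT hac] with x hx
  rw [slope_def_field, hc, sub_zero]
  exact (div_neg_of_pos_of_neg (hpos x hx) (sub_neg.2 hx.2)).le

theorem HasDerivAt.nonneg_of_pos_right {f : ℝ → ℝ} {f' c b : ℝ} (hf : HasDerivAt f f' c)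
    (hcb : c < b) (hc : f c = 0) (hpos : ∀ x ∈ Ioo c b, 0 < f x) : 0 ≤ f' := by
  refine ge_of_tendsto (hasDerivAt_iff_tendsto_slope_left_right.1 hf).2 ?_
  filter_upwards [Ioo_mem_nhdsGT hcb] with x hx
  rw [slope_def_field, hc, sub_zero]
  exact (div_pos (hpos x hx) (sub_pos.2 hx.1)).le

section SignArgument

variable {a b : ℝ} {s s' D k : ℝ → ℝ}

theorem nonpos_of_hasDerivAt_eq_mul_pos
    (hs : ∀ x ∈ Ioo a b, HasDerivAt s (s' x) x)
    (hD : ∀ x ∈ Ioo a b, HasDerivAt D (s x * k x) x) (hk : ∀ x ∈ Ioo a b, 0 < k x)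
    (hDc : ContinuousOn D (Icc a b)) (hDa : D a = 0) (hDb : D b = 0)
    (hzero : ∀ x ∈ Ioo a b, s x = 0 → SignType.sign (D x) = SignType.sign (s' x)) :
    ∀ x ∈ Ioo a b, s x ≤ 0 := by
  intro x₀ hx₀
  by_contra! hpos
  have hsc : ContinuousOn s (Ioo a b) := fun x hx => (hs x hx).continuousAt.continuousWithinAt
  obtain ⟨c, hc, hpos_r, hzero_r⟩ := exists_first_zero_right hx₀.2
    (hsc.mono (Ico_subset_Ioo_left hx₀.1)) hpos
  obtain ⟨c', hc', hpos_l, hzero_l⟩ := exists_first_zero_left hx₀.1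
    (hsc.mono (Ioc_subset_Ioo_right hx₀.2)) hpos
  have hc'c : c' < c := hc'.2.trans hc.1
  have hpos_Ioo : ∀ x ∈ Ioo c' c, 0 < s x := fun x hx =>
    (le_total x x₀).elim (fun h => hpos_l x ⟨hx.1, h⟩) (fun h => hpos_r x ⟨h, hx.2⟩)
  have hsub : Icc c' c ⊆ Icc a b := Icc_subset_Icc hc'.1 hc.2
  have hmono : StrictMonoOn D (Icc c' c) := by
    refine strictMonoOn_of_deriv_pos (convex_Icc c' c) (hDc.mono hsub) fun x hx => ?_
    rw [interior_Icc] at hx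
    have hx' : x ∈ Ioo a b := ⟨hc'.1.trans_lt hx.1, hx.2.trans_le hc.2⟩
    rw [(hD x hx').deriv]
    exact mul_pos (hpos_Ioo x hx) (hk x hx')
  have hDc_nonpos : D c ≤ 0 := by
    rcases hc.2.eq_or_lt with rfl | hcb
    · exact hDb.le
    have hcI : c ∈ Ioo a b := ⟨hx₀.1.trans hc.1, hcb⟩
    have hs'c := (hs c hcI).nonpos_of_pos_left hc.1 (hzero_r hcb)
      fun x hx => hpos_r x (Ioo_subset_Ico_self hx)
    rwa [← sign_nonpos_iff, hzero c hcI (hzero_r hcb), sign_nonpos_iff]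
  have hDc'_nonneg : 0 ≤ D c' := by
    rcases hc'.1.eq_or_lt with rfl | hac
    · exact hDa.ge
    have hcI : c' ∈ Ioo a b := ⟨hac, hc'.2.trans hx₀.2⟩
    have hs'c := (hs c' hcI).nonneg_of_pos_right hc'.2 (hzero_l hac)
      fun x hx => hpos_l x (Ioo_subset_Ioc_self hx)
    rwa [← sign_nonneg_iff, hzero c' hcI (hzero_l hac), sign_nonneg_iff]
  linarith [hmono ⟨le_rfl, hc'c.le⟩ ⟨hc'c.le, le_rfl⟩ hc'c]

theorem eqOn_zero_of_hasDerivAt_eq_mul_pos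
    (hs : ∀ x ∈ Ioo a b, HasDerivAt s (s' x) x)
    (hD : ∀ x ∈ Ioo a b, HasDerivAt D (s x * k x) x) (hk : ∀ x ∈ Ioo a b, 0 < k x)
    (hDc : ContinuousOn D (Icc a b)) (hDa : D a = 0) (hDb : D b = 0)
    (hzero : ∀ x ∈ Ioo a b, s x = 0 → SignType.sign (D x) = SignType.sign (s' x)) :
    EqOn s 0 (Ioo a b) := by
  have hneg : ∀ x ∈ Ioo a b, (-s) x ≤ 0 := by
    refine nonpos_of_hasDerivAt_eq_mul_pos (s' := -s') (D := -D) (k := k)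
      (fun x hx => (hs x hx).neg) (fun x hx => ?_) hk hDc.neg (by simp [hDa]) (by simp [hDb])
      fun x hx hx0 => ?_
    · simpa [neg_mul] using (hD x hx).neg
    · simp only [Pi.neg_apply, neg_eq_zero] at hx0 ⊢
      rw [Left.sign_neg, Left.sign_neg, hzero x hx hx0]
  intro x hx
  exact le_antisymm (nonpos_of_hasDerivAt_eq_mul_pos hs hD hk hDc hDa hDb hzero x hx)
    (neg_nonpos.1 (hneg x hx))

end SignArgument

theorem ContDiffOn.hasDerivAt_derivWithin_Icc {u : ℝ → ℝ} {a b x : ℝ}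
    (hu : ContDiffOn ℝ 2 u (Icc a b)) (hx : x ∈ Ioo a b) :
    HasDerivAt u (derivWithin u (Icc a b) x) x ∧
      HasDerivAt (derivWithin u (Icc a b)) (deriv (deriv u) x) x := by
  have hio : ContDiffOn ℝ 2 u (Ioo a b) := hu.mono Ioo_subset_Icc_self
  have hnhds : Ioo a b ∈ 𝓝 x := isOpen_Ioo.mem_nhds hx
  have heq : derivWithin u (Icc a b) =ᶠ[𝓝 x] deriv u := by
    filter_upwards [hnhds] with y hy using derivWithin_of_mem_nhds (Icc_mem_nhds hy.1 hy.2)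
  have hd1 : DifferentiableAt ℝ u x := (hio.differentiableOn two_ne_zero).differentiableAt hnhds
  have hd2 : DifferentiableAt ℝ (deriv u) x :=
    ((hio.deriv_of_isOpen isOpen_Ioo le_rfl).differentiableOn one_ne_zero).differentiableAt hnhds
  exact ⟨heq.eq_of_nhds ▸ hd1.hasDerivAt, hd2.hasDerivAt.congr_of_eventuallyEq heq⟩

theorem cos_two_mul_f₀ (x : ℝ) : cos (2 * f₀ x) = (1 - 6 * x ^ 2 + x ^ 4) / (1 + x ^ 2) ^ 2 := by
  have h : sqrt (1 + x ^ 2) ^ 2 = 1 + x ^ 2 := sq_sqrt (by positivity)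
  rw [f₀, cos_two_mul, cos_two_mul, cos_arctan, div_pow, one_pow, h]
  field_simp
  ring

namespace WaveMap

noncomputable section

def symmetryMode (x : ℝ) : ℝ := 2 * x / (1 + x ^ 2)

def symmetryModeDeriv (x : ℝ) : ℝ := 2 * (1 - x ^ 2) / (1 + x ^ 2) ^ 2

def weight (lam x : ℝ) : ℝ := (1 - x ^ 2) ^ lam

def wronskian (lam : ℝ) (u v : ℝ → ℝ) (x : ℝ) : ℝ :=
  x ^ 2 * weight lam x * (symmetryMode x * v x - symmetryModeDeriv x * u x)

def wronskianCoeff (lam x : ℝ) : ℝ :=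
  2 * (1 - lam) * x ^ 3 * (4 + lam + lam * x ^ 2) * weight lam x / ((1 + x ^ 2) ^ 2 * (1 - x ^ 2))

/-- Chosen so that `lyapunovCoeff * wronskianCoeff = (x³ w g)' + x³ w g'`, which makes `u` drop
out of the derivative of `lyapunov`. -/
def lyapunovCoeff (lam x : ℝ) : ℝ :=
  (5 - (4 + 2 * lam) * x ^ 2 - (1 + 2 * lam) * x ^ 4) / ((1 - lam) * (4 + lam + lam * x ^ 2))

def lyapunovCoeffDeriv (lam x : ℝ) : ℝ :=
  2 * x * ((-(4 + 2 * lam) - 2 * (1 + 2 * lam) * x ^ 2) * (4 + lam + lam * x ^ 2)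
      - lam * (5 - (4 + 2 * lam) * x ^ 2 - (1 + 2 * lam) * x ^ 4))
    / ((1 - lam) * (4 + lam + lam * x ^ 2) ^ 2)

def lyapunov (lam : ℝ) (u v : ℝ → ℝ) (x : ℝ) : ℝ :=
  -(x ^ 3 * weight lam x * symmetryMode x * u x) - lyapunovCoeff lam x * wronskian lam u v x

end

theorem hasDerivAt_symmetryMode (x : ℝ) : HasDerivAt symmetryMode (symmetryModeDeriv x) x := by
  refine (((hasDerivAt_id x).const_mul 2).div ((hasDerivAt_pow 2 x).const_add 1)
    (by positivity)).congr_deriv ?_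
  simp only [symmetryModeDeriv, id]
  field_simp
  ring

theorem hasDerivAt_symmetryModeDeriv (x : ℝ) :
    HasDerivAt symmetryModeDeriv (4 * x * (x ^ 2 - 3) / (1 + x ^ 2) ^ 3) x := by
  refine ((((hasDerivAt_pow 2 x).const_sub 1).const_mul 2).div
    (((hasDerivAt_pow 2 x).const_add 1).pow 2) (by simp only [Pi.pow_apply]; positivity)).congr_deriv ?_
  simp only [Pi.pow_apply]
  field_simp
  ring

theorem hasDerivAt_weight (lam : ℝ) {x : ℝ} (hx : x ^ 2 < 1) :
    HasDerivAt (weight lam) (-(2 * lam * x / (1 - x ^ 2)) * weight lam x) x := by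
  have hx' : 1 - x ^ 2 ≠ 0 := sub_ne_zero.2 hx.ne'
  refine (((hasDerivAt_pow 2 x).const_sub 1).rpow_const (p := lam) (Or.inl hx')).congr_deriv ?_
  rw [weight, rpow_sub_one hx']
  field_simp
  ring

theorem hasDerivAt_wronskian {lam x v' : ℝ} {u v : ℝ → ℝ} (hx0 : x ≠ 0) (hx : x ^ 2 < 1)
    (hu : HasDerivAt u (v x) x) (hv : HasDerivAt v v' x)
    (hode : v' + (2 / x - 2 * lam * x / (1 - x ^ 2)) * v x
      - (2 * cos (2 * f₀ x) / (x ^ 2 * (1 - x ^ 2)) + lam * (1 + lam) / (1 - x ^ 2)) * u x = 0) :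
    HasDerivAt (wronskian lam u v) (-(wronskianCoeff lam x * u x)) x := by
  have hx' : 1 - x ^ 2 ≠ 0 := sub_ne_zero.2 hx.ne'
  rw [cos_two_mul_f₀] at hode
  refine (((hasDerivAt_pow 2 x).mul (hasDerivAt_weight lam hx)).mul
    (((hasDerivAt_symmetryMode x).mul hv).sub
      ((hasDerivAt_symmetryModeDeriv x).mul hu))).congr_deriv ?_
  rw [eq_sub_of_add_eq (sub_eq_zero.1 hode)]
  simp only [wronskianCoeff, symmetryMode, symmetryModeDeriv, Pi.mul_apply, Pi.sub_apply]
  field_simp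
  ring

theorem hasDerivAt_lyapunovCoeff {lam : ℝ} (hlam0 : 0 ≤ lam) (hlam1 : lam < 1) (x : ℝ) :
    HasDerivAt (lyapunovCoeff lam) (lyapunovCoeffDeriv lam x) x := by
  have h1 : 1 - lam ≠ 0 := sub_ne_zero.2 hlam1.ne'
  have h2 : 4 + lam + lam * x ^ 2 ≠ 0 := by positivity
  refine ((((hasDerivAt_pow 2 x).const_mul (4 + 2 * lam)).const_sub 5).sub
    ((hasDerivAt_pow 4 x).const_mul (1 + 2 * lam))).div
    ((((hasDerivAt_pow 2 x).const_mul lam).const_add (4 + lam)).const_mul (1 - lam))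
    (mul_ne_zero h1 h2) |>.congr_deriv ?_
  simp only [lyapunovCoeffDeriv, Pi.sub_apply]
  field_simp
  ring

theorem hasDerivAt_lyapunov {lam x : ℝ} {u v : ℝ → ℝ} (hlam0 : 0 ≤ lam) (hlam1 : lam < 1)
    (hx : x ^ 2 < 1) (hu : HasDerivAt u (v x) x)
    (hs : HasDerivAt (wronskian lam u v) (-(wronskianCoeff lam x * u x)) x) :
    HasDerivAt (lyapunov lam u v) (wronskian lam u v x * -(x + lyapunovCoeffDeriv lam x)) x := by
  have hx' : 1 - x ^ 2 ≠ 0 := sub_ne_zero.2 hx.ne'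
  have h1 : 1 - lam ≠ 0 := sub_ne_zero.2 hlam1.ne'
  have h2 : 4 + lam + lam * x ^ 2 ≠ 0 := by positivity
  refine (((((hasDerivAt_pow 3 x).mul (hasDerivAt_weight lam hx)).mul
    (hasDerivAt_symmetryMode x)).mul hu).neg.sub
    ((hasDerivAt_lyapunovCoeff hlam0 hlam1 x).mul hs)).congr_deriv ?_
  simp only [wronskian, wronskianCoeff, lyapunovCoeff, lyapunovCoeffDeriv, symmetryMode,
    symmetryModeDeriv, Pi.mul_apply]
  field_simp
  ring

theorem add_lyapunovCoeffDeriv_neg {lam x : ℝ} (hlam0 : 0 ≤ lam) (hlam1 : lam < 1)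
    (hx : 0 < x) : x + lyapunovCoeffDeriv lam x < 0 := by
  have h1 : 0 < 1 - lam := sub_pos.2 hlam1
  have hM : 0 < (1 - lam) * (4 + lam + lam * x ^ 2) ^ 2 := by positivity
  rw [lyapunovCoeffDeriv, add_div' _ _ _ hM.ne']
  refine div_neg_of_neg_of_pos ?_ hM
  -- the numerator is `-x` times a polynomial in `lam` and `x` with positive coefficients
  have hp : 0 < x * (16 + 16 * x ^ 2 + lam * (42 + 28 * x ^ 2 + 2 * x ^ 4)
      + lam ^ 2 * (11 + 14 * x ^ 2 + 3 * x ^ 4) + lam ^ 3 * (1 + x ^ 2) ^ 2) := by positivity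
  linear_combination hp

theorem weight_pos (lam : ℝ) {x : ℝ} (hx : x ^ 2 < 1) : 0 < weight lam x :=
  rpow_pos_of_pos (sub_pos.2 hx) lam

theorem wronskianCoeff_pos {lam x : ℝ} (hlam0 : 0 ≤ lam) (hlam1 : lam < 1) (hx : x ∈ Ioo 0 1) :
    0 < wronskianCoeff lam x := by
  have hx2 : x ^ 2 < 1 := pow_lt_one₀ hx.1.le hx.2 two_ne_zero
  have := weight_pos lam hx2
  have := sub_pos.2 hlam1
  have := sub_pos.2 hx2
  have := hx.1
  unfold wronskianCoeff
  positivity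

theorem sign_lyapunov_of_wronskian_eq_zero {lam x : ℝ} {u v : ℝ → ℝ} (hlam0 : 0 ≤ lam)
    (hlam1 : lam < 1) (hx : x ∈ Ioo 0 1) (hs : wronskian lam u v x = 0) :
    SignType.sign (lyapunov lam u v x) = SignType.sign (-(wronskianCoeff lam x * u x)) := by
  have hx2 : x ^ 2 < 1 := pow_lt_one₀ hx.1.le hx.2 two_ne_zero
  have hpos : 0 < x ^ 3 * weight lam x * symmetryMode x := by
    have := weight_pos lam hx2
    have := hx.1
    unfold symmetryMode
    positivity
  rw [lyapunov, hs, mul_zero, sub_zero, ← mul_neg, ← mul_neg, sign_mul, sign_pos hpos, sign_mul,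
    sign_pos (wronskianCoeff_pos hlam0 hlam1 hx)]

theorem continuousOn_lyapunov {lam : ℝ} {u v : ℝ → ℝ} {S : Set ℝ} (hlam0 : 0 ≤ lam) (hlam1 : lam < 1)
    (hu : ContinuousOn u S) (hv : ContinuousOn v S) : ContinuousOn (lyapunov lam u v) S := by
  have hw : Continuous (weight lam) :=
    (continuous_const.sub (continuous_pow 2)).rpow_const fun _ => Or.inr hlam0
  have hG : Continuous symmetryMode :=
    (continuous_const.mul continuous_id).div (by fun_prop) fun x => by positivity
  have hG' : Continuous symmetryModeDeriv :=
    (by fun_prop : Continuous fun x : ℝ => 2 * (1 - x ^ 2)).div (by fun_prop) fun x => by positivity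
  have hA : Continuous (lyapunovCoeff lam) :=
    (by fun_prop : Continuous fun x : ℝ => 5 - (4 + 2 * lam) * x ^ 2 - (1 + 2 * lam) * x ^ 4).div
      (by fun_prop) fun x => mul_ne_zero (sub_ne_zero.2 hlam1.ne') (by positivity)
  unfold lyapunov wronskian
  fun_prop

theorem lyapunov_zero (lam : ℝ) (u v : ℝ → ℝ) : lyapunov lam u v 0 = 0 := by
  simp [lyapunov, wronskian]

theorem lyapunov_one {lam : ℝ} (hlam : 0 < lam) (u v : ℝ → ℝ) : lyapunov lam u v 1 = 0 := by
  simp [lyapunov, wronskian, weight, zero_rpow hlam.ne']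

end WaveMap

open WaveMap in
theorem main_nonexistence (lam : ℝ) (hlam : lam ∈ Set.Ioo (0:ℝ) 1) :
    ¬ ∃ u : ℝ → ℝ, ContDiffOn ℝ 2 u (Set.Icc (0:ℝ) 1) ∧
      (∃ ρ ∈ Set.Icc (0:ℝ) 1, u ρ ≠ 0) ∧
      (∀ ρ ∈ Set.Ioo (0:ℝ) 1,
        deriv (deriv u) ρ + (2 / ρ - 2 * lam * ρ / (1 - ρ^2)) * deriv u ρ
          - (2 * Real.cos (2 * f₀ ρ) / (ρ^2 * (1 - ρ^2))
              + lam * (1 + lam) / (1 - ρ^2)) * u ρ = 0) := by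
  obtain ⟨hlam0, hlam1⟩ := hlam
  rintro ⟨u, hu, ⟨ρ, hρ, hne⟩, hode⟩
  -- `derivWithin` rather than `deriv`: `v` is then continuous up to the endpoints
  set v := derivWithin u (Icc 0 1)
  have hx2 : ∀ x ∈ Ioo (0:ℝ) 1, x ^ 2 < 1 := fun x hx => pow_lt_one₀ hx.1.le hx.2 two_ne_zero
  have hs : ∀ x ∈ Ioo (0:ℝ) 1, HasDerivAt (wronskian lam u v) (-(wronskianCoeff lam x * u x)) x := by
    intro x hx
    obtain ⟨hux, hvx⟩ := hu.hasDerivAt_derivWithin_Icc hx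
    refine hasDerivAt_wronskian hx.1.ne' (hx2 x hx) hux hvx ?_
    rw [show v x = deriv u x from derivWithin_of_mem_nhds (Icc_mem_nhds hx.1 hx.2)]
    exact hode x hx
  have hs0 : EqOn (wronskian lam u v) 0 (Ioo 0 1) :=
    eqOn_zero_of_hasDerivAt_eq_mul_pos hs
      (fun x hx => hasDerivAt_lyapunov hlam0.le hlam1 (hx2 x hx)
        (hu.hasDerivAt_derivWithin_Icc hx).1 (hs x hx))
      (fun x hx => neg_pos.2 (add_lyapunovCoeffDeriv_neg hlam0.le hlam1 hx.1))
      (continuousOn_lyapunov hlam0.le hlam1 hu.continuousOn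
        (hu.continuousOn_derivWithin (uniqueDiffOn_Icc one_pos) one_le_two))
      (lyapunov_zero lam u v) (lyapunov_one hlam0 u v)
      (fun x hx => sign_lyapunov_of_wronskian_eq_zero hlam0.le hlam1 hx)
  have hu0 : EqOn u 0 (Ioo 0 1) := fun x hx => by
    have h := (hs x hx).unique ((hasDerivAt_const x 0).congr_of_eventuallyEq
      (hs0.eventuallyEq_of_mem (isOpen_Ioo.mem_nhds hx)))
    simpa [(wronskianCoeff_pos hlam0.le hlam1 hx).ne'] using h
  exact hne (hu0.of_subset_closure hu.continuousOn continuousOn_const Ioo_subset_Icc_self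
    (by rw [closure_Ioo zero_ne_one]) hρ)
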